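/- Let p be an odd prime and C = ⟨g(x) + u p(x), u ā(x)⟩ a skew cyclic code of length n over R = F_p[u]/(u^2), where g(x) is monic of degree r, ā(x) ∈ F_p[x] is monic of degree t < r, x^n−1 = k(x)∗g(x) in R[x;θ], ā(x) | x^n−1 in F_p[x], ā(x) divides g(x) mod u, and ((x^n−1)/g)·u p(x) ∈ ⟨u ā(x)⟩. Then |C| = p^{2(n−r)} · p^{r−t}. -/

import Mathlib

open TrivSqZeroExt

theorem RingAut.one_apply' {R : Type*} [Ring R] (b : R) : (1 : RingAut R) b = b := rfl

/-- The skew polynomial ring `R[x;θ]`, as finitely supported coefficient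
sequences with multiplication twisted by the ring automorphism `θ`:
`(a x^i) * (b x^j) = a θ^i(b) x^{i+j}`. -/
def SkewPoly (R : Type*) [Ring R] (θ : RingAut R) : Type _ := ℕ →₀ R

namespace SkewPoly

variable {R : Type*} [Ring R] (θ : RingAut R)

/-- The skew-twisted convolution product. -/
noncomputable def mulAux (f g : ℕ →₀ R) : ℕ →₀ R :=
  f.sum fun i a => g.sum fun j b => Finsupp.single (i + j) (a * (θ ^ i) b)

theorem mulAux_zero_left (g : ℕ →₀ R) : mulAux θ 0 g = 0 := Finsupp.sum_zero_index

theorem mulAux_zero_right (f : ℕ →₀ R) : mulAux θ f 0 = 0 := by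
  simp [mulAux, Finsupp.sum_zero_index]

theorem mulAux_add_left (f f' g : ℕ →₀ R) :
    mulAux θ (f + f') g = mulAux θ f g + mulAux θ f' g := by
  unfold mulAux
  apply Finsupp.sum_add_index' <;> intros <;> simp [add_mul, Finsupp.single_add, Finsupp.sum_add]

theorem mulAux_add_right (f g g' : ℕ →₀ R) :
    mulAux θ f (g + g') = mulAux θ f g + mulAux θ f g' := by
  unfold mulAux
  rw [← Finsupp.sum_add]
  apply Finsupp.sum_congr
  intro i _
  apply Finsupp.sum_add_index' <;> intros <;> simp [mul_add, Finsupp.single_add]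

theorem one_mulAux (g : ℕ →₀ R) : mulAux θ (Finsupp.single 0 1) g = g := by
  unfold mulAux
  rw [Finsupp.sum_single_index]
  · simp [RingAut.one_apply', Finsupp.sum_single]
  · simp

theorem mulAux_one (f : ℕ →₀ R) : mulAux θ f (Finsupp.single 0 1) = f := by
  unfold mulAux
  have : ∀ i ∈ f.support, ((Finsupp.single 0 1 : ℕ →₀ R).sum fun j b =>
      Finsupp.single (i + j) (f i * (θ ^ i) b)) = Finsupp.single i (f i) := by
    intro i _
    rw [Finsupp.sum_single_index] <;> simp
  rw [Finsupp.sum_congr this, Finsupp.sum_single f]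

theorem mulAux_single_single (i j : ℕ) (a b : R) :
    mulAux θ (Finsupp.single i a) (Finsupp.single j b) =
      Finsupp.single (i + j) (a * (θ ^ i) b) := by
  unfold mulAux
  rw [Finsupp.sum_single_index, Finsupp.sum_single_index]
  · simp
  · rw [Finsupp.sum_single_index] <;> simp

theorem mulAux_assoc (f g h : ℕ →₀ R) :
    mulAux θ (mulAux θ f g) h = mulAux θ f (mulAux θ g h) := by
  induction f using Finsupp.induction_linear with
  | zero => simp [mulAux_zero_left]
  | add f f' hf hf' => simp [mulAux_add_left, hf, hf']
  | single i a =>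
    induction g using Finsupp.induction_linear with
    | zero => simp [mulAux_zero_left, mulAux_zero_right]
    | add g g' hg hg' => simp [mulAux_add_left, mulAux_add_right, hg, hg']
    | single j b =>
      induction h using Finsupp.induction_linear with
      | zero => simp [mulAux_zero_right]
      | add h h' hh hh' => simp [mulAux_add_right, hh, hh']
      | single k c =>
        rw [mulAux_single_single, mulAux_single_single, mulAux_single_single,
          mulAux_single_single]
        rw [add_assoc, mul_assoc, map_mul, pow_add]
        rfl

variable {θ}

noncomputable instance : AddCommGroup (SkewPoly R θ) := inferInstanceAs (AddCommGroup (ℕ →₀ R))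

/-- Reinterpret a skew polynomial as a finitely supported function. -/
def toFinsupp (f : SkewPoly R θ) : ℕ →₀ R := f

/-- Build a skew polynomial out of a finitely supported function. -/
def ofFinsupp (f : ℕ →₀ R) : SkewPoly R θ := f

noncomputable instance : Ring (SkewPoly R θ) where
  __ := (inferInstance : AddCommGroup (SkewPoly R θ))
  mul f g := mulAux θ (toFinsupp f) (toFinsupp g)
  one := Finsupp.single 0 1
  left_distrib f g h := mulAux_add_right θ (toFinsupp f) (toFinsupp g) (toFinsupp h)
  right_distrib f g h := mulAux_add_left θ (toFinsupp f) (toFinsupp g) (toFinsupp h)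
  zero_mul := mulAux_zero_left θ
  mul_zero := mulAux_zero_right θ
  mul_assoc := mulAux_assoc θ
  one_mul := one_mulAux θ
  mul_one := mulAux_one θ

variable (θ) in
/-- The constant skew polynomial `a`. -/
noncomputable def C (a : R) : SkewPoly R θ := ofFinsupp (Finsupp.single 0 a)

variable (θ) in
/-- The variable `x` of the skew polynomial ring. -/
noncomputable def X : SkewPoly R θ := ofFinsupp (Finsupp.single 1 1)

/-- The `n`-th coefficient of a skew polynomial. -/
def coeff (f : SkewPoly R θ) (n : ℕ) : R := toFinsupp f n

/-- The degree of a skew polynomial (`⊥` for the zero polynomial). -/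
def degree (f : SkewPoly R θ) : WithBot ℕ := (toFinsupp f).support.max

/-- The degree of a skew polynomial as a natural number. -/
def natDegree (f : SkewPoly R θ) : ℕ := WithBot.unbotD 0 (degree f)

/-- The leading coefficient of a skew polynomial. -/
def leadingCoeff (f : SkewPoly R θ) : R := coeff f (natDegree f)

/-- A skew polynomial is monic if its leading coefficient is `1`. -/
def Monic (f : SkewPoly R θ) : Prop := leadingCoeff f = 1

end SkewPoly

/-- The inclusion of `F_p[x]` into the skew polynomial ring
`(F_p + u F_p)[x;θ]` (coefficientwise `a ↦ a + u·0`); this is the natural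
embedding of `F_p[x]` as a subring of `R[x;θ]` since `θ` fixes `F_p`. -/
noncomputable def SkewPoly.ofPoly {p : ℕ}
    (θ : RingAut (DualNumber (ZMod p))) (f : Polynomial (ZMod p)) :
    SkewPoly (DualNumber (ZMod p)) θ :=
  SkewPoly.ofFinsupp
    (Finsupp.mapRange (inl : ZMod p → DualNumber (ZMod p)) (inl_zero (ZMod p)) f.toFinsupp.coeff)

/-- Reduction of a skew polynomial over `F_p + u F_p` modulo `u`, i.e. the
polynomial in `F_p[x]` whose coefficients are the first components of the
coefficients. -/
noncomputable def SkewPoly.fstPoly {p : ℕ}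
    {θ : RingAut (DualNumber (ZMod p))} (f : SkewPoly (DualNumber (ZMod p)) θ) :
    Polynomial (ZMod p) :=
  Polynomial.ofFinsupp (AddMonoidAlgebra.ofCoeff
    (Finsupp.mapRange TrivSqZeroExt.fst fst_zero (SkewPoly.toFinsupp f)))


/-!
Write `xⁿ - 1 = k g` and `g mod u = ā g₁`. Every codeword has exactly one representative
`Q (g + u p) + u s ā` modulo `xⁿ - 1` with `Q ∈ R[x;θ]` of degree `< n - r` and `s ∈ F_p[x]` of
degree `< r - t`, and there are `(p²)^(n-r) p^(r-t)` of these.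

Two computations in `R[x;θ]` drive the argument: `u s · f = u (s · (f mod u))`, as `θ` fixes `F_p`
and `u² = 0`; and `f · u s = u (f̃ s)` with `f̃ = ∑ (fᵢ mod u) cᵢ xⁱ`, where `θⁱ(u) = cᵢ u`. The `cᵢ`
are units, so the left multiples of `u ā` are exactly the `u m ā` with `m ∈ F_p[x]`.

Existence: divide the coefficient of `g + u p` on the right by the monic `k`. The quotient only
contributes multiples of `k (g + u p) = (xⁿ - 1) + k u p`, and the hypothesis on `k u p` makes the
last term a multiple of `u ā`. Beyond `Q (g + u p)` this leaves some `u M ā`, and writing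
`M = (y k̄ + w) g₁ + s` turns it into `u y (xⁿ - 1) + u w (g + u p) + u s ā`.
Uniqueness: reducing a representative of `0` modulo `u` gives `Q̄ ḡ = h̄ k̄ ḡ`, so `Q̄ = 0` by
degrees and `Q = u q`; the `u`-parts then give `q g₁ + s = h' k̄ g₁`, whence `s = 0` and `q = 0`.
-/

namespace SkewPoly

variable {R : Type*} [Ring R] {θ : RingAut R}

noncomputable def monomial (i : ℕ) (a : R) : SkewPoly R θ := ofFinsupp (Finsupp.single i a)

@[ext]
theorem ext {f g : SkewPoly R θ} (h : ∀ i, coeff f i = coeff g i) : f = g := Finsupp.ext h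

@[simp] theorem coeff_zero (i : ℕ) : coeff (0 : SkewPoly R θ) i = 0 := rfl

@[simp] theorem coeff_add (f g : SkewPoly R θ) (i : ℕ) :
    coeff (f + g) i = coeff f i + coeff g i := rfl

@[simp] theorem coeff_sub (f g : SkewPoly R θ) (i : ℕ) :
    coeff (f - g) i = coeff f i - coeff g i := rfl

theorem coeff_monomial (i j : ℕ) (a : R) :
    coeff (monomial i a : SkewPoly R θ) j = if i = j then a else 0 :=
  Finsupp.single_apply

theorem one_def : (1 : SkewPoly R θ) = monomial 0 1 := rfl

theorem monomial_mul_monomial (i j : ℕ) (a b : R) :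
    (monomial i a * monomial j b : SkewPoly R θ) = monomial (i + j) (a * (θ ^ i) b) :=
  mulAux_single_single θ i j a b

@[elab_as_elim]
theorem induction_on {P : SkewPoly R θ → Prop} (f : SkewPoly R θ) (zero : P 0)
    (add : ∀ f g, P f → P g → P (f + g)) (monomial : ∀ i a, P (monomial i a)) : P f :=
  Finsupp.induction_linear f zero add monomial

theorem coeff_mul (f g : SkewPoly R θ) (m : ℕ) :
    coeff (f * g) m = ∑ i ∈ Finset.range (m + 1), coeff f i * (θ ^ i) (coeff g (m - i)) := by
  induction f using induction_on with
  | zero => simp [zero_mul]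
  | add f f' hf hf' => simp [add_mul, hf, hf', Finset.sum_add_distrib]
  | monomial i a =>
    induction g using induction_on with
    | zero => simp [mul_zero]
    | add g g' hg hg' => simp [mul_add, hg, hg', Finset.sum_add_distrib]
    | monomial j b =>
      rw [monomial_mul_monomial]
      simp only [coeff_monomial, ite_mul, zero_mul, Finset.sum_ite_eq, Finset.mem_range]
      split_ifs <;> first | omega | simp_all

theorem coeff_monomial_mul (k : ℕ) (a : R) (g : SkewPoly R θ) (m : ℕ) :
    coeff (monomial k a * g) m = if k ≤ m then a * (θ ^ k) (coeff g (m - k)) else 0 := by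
  simp only [coeff_mul, coeff_monomial, ite_mul, zero_mul, Finset.sum_ite_eq, Finset.mem_range,
    Nat.lt_succ_iff]

theorem X_pow (m : ℕ) : X θ ^ m = (monomial m 1 : SkewPoly R θ) := by
  induction m with
  | zero => rfl
  | succ m ih =>
    rw [pow_succ, ih]
    exact (monomial_mul_monomial m 1 1 1).trans (by simp)

theorem coeff_X_pow_sub_one (n j : ℕ) :
    coeff (X θ ^ n - 1) j = (if n = j then (1 : R) else 0) - if 0 = j then 1 else 0 := by
  rw [coeff_sub, X_pow, one_def, coeff_monomial, coeff_monomial]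

noncomputable def toPolynomial : SkewPoly R θ ≃+ Polynomial R :=
  ((Polynomial.toFinsuppIso R).toAddEquiv.trans AddMonoidAlgebra.coeffAddEquiv).symm

theorem degree_toPolynomial (f : SkewPoly R θ) : (toPolynomial f).degree = degree f := rfl

theorem toPolynomial_mem_degreeLT {f : SkewPoly R θ} {m : ℕ} :
    toPolynomial f ∈ Polynomial.degreeLT R m ↔ degree f < m := by
  rw [Polynomial.mem_degreeLT, degree_toPolynomial]

theorem degree_lt_iff_coeff_zero (f : SkewPoly R θ) (m : ℕ) :
    degree f < m ↔ ∀ i, m ≤ i → coeff f i = 0 := by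
  rw [← degree_toPolynomial, Polynomial.degree_lt_iff_coeff_zero]
  rfl

theorem Monic.ne_zero [Nontrivial R] {f : SkewPoly R θ} (hf : Monic f) : f ≠ 0 := by
  rintro rfl
  exact zero_ne_one hf

theorem coeff_eq_zero_of_natDegree_lt {f : SkewPoly R θ} {i : ℕ} (h : natDegree f < i) :
    coeff f i = 0 := by
  by_contra hne
  have hle := Finset.le_max (Finsupp.mem_support_iff.mpr hne)
  unfold natDegree degree at h
  cases hmax : (toFinsupp f).support.max with
  | bot => simp [hmax] at hle
  | coe d =>
    rw [hmax, WithBot.coe_le_coe] at hle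
    rw [hmax, WithBot.unbotD_coe] at h
    omega

theorem leadingCoeff_ne_zero {f : SkewPoly R θ} (hf : f ≠ 0) : leadingCoeff f ≠ 0 := by
  obtain ⟨d, hd⟩ := Finset.max_of_nonempty
    (Finsupp.support_nonempty_iff.mpr hf : (toFinsupp f).support.Nonempty)
  have hdeg : natDegree f = d := by
    rw [natDegree, degree, hd]
    rfl
  rw [leadingCoeff, hdeg]
  exact Finsupp.mem_support_iff.mp (Finset.mem_of_max hd)

theorem natDegree_eq_of_coeff {f : SkewPoly R θ} {N : ℕ} (hN : coeff f N ≠ 0)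
    (h : ∀ j, N < j → coeff f j = 0) : natDegree f = N := by
  have hf : f ≠ 0 := by rintro rfl; exact hN rfl
  refine le_antisymm (not_lt.mp fun hlt => leadingCoeff_ne_zero hf (h _ hlt)) ?_
  exact not_lt.mp fun hlt => hN (coeff_eq_zero_of_natDegree_lt hlt)

theorem coeff_mul_of_natDegree_add_lt {f g : SkewPoly R θ} {j : ℕ}
    (h : natDegree f + natDegree g < j) : coeff (f * g) j = 0 := by
  refine (coeff_mul f g j).trans (Finset.sum_eq_zero fun i _ => ?_)
  rcases lt_or_ge (natDegree f) i with hi | hi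
  · rw [coeff_eq_zero_of_natDegree_lt hi, zero_mul]
  · rw [coeff_eq_zero_of_natDegree_lt (by omega : natDegree g < j - i), map_zero, mul_zero]

theorem coeff_mul_natDegree_add {g : SkewPoly R θ} (hg : Monic g) (f : SkewPoly R θ) :
    coeff (f * g) (natDegree f + natDegree g) = leadingCoeff f := by
  rw [coeff_mul, Finset.sum_eq_single (natDegree f)]
  · rw [Nat.add_sub_cancel_left, show coeff g (natDegree g) = 1 from hg, map_one, mul_one]
    rfl
  · intro i _ hi
    rcases lt_or_gt_of_ne hi with hi | hi
    · rw [coeff_eq_zero_of_natDegree_lt (by omega : natDegree g < _), map_zero, mul_zero]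
    · rw [coeff_eq_zero_of_natDegree_lt hi, zero_mul]
  · simp

theorem natDegree_mul_monic {f g : SkewPoly R θ} (hg : Monic g) (hf : f ≠ 0) :
    natDegree (f * g) = natDegree f + natDegree g :=
  natDegree_eq_of_coeff (by rw [coeff_mul_natDegree_add hg]; exact leadingCoeff_ne_zero hf)
    fun _ => coeff_mul_of_natDegree_add_lt

theorem leadingCoeff_mul_monic {g : SkewPoly R θ} (hg : Monic g) (f : SkewPoly R θ) :
    leadingCoeff (f * g) = leadingCoeff f := by
  rcases eq_or_ne f 0 with rfl | hf
  · rw [zero_mul]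
  · rw [leadingCoeff, natDegree_mul_monic hg hf, coeff_mul_natDegree_add hg]

theorem Monic.of_mul_monic_right {f g : SkewPoly R θ} (hg : Monic g) (hfg : Monic (f * g)) :
    Monic f := by
  rwa [Monic, ← leadingCoeff_mul_monic hg]

theorem natDegree_X_pow_sub_one [Nontrivial R] {n : ℕ} (hn : 0 < n) :
    natDegree (X θ ^ n - 1 : SkewPoly R θ) = n :=
  natDegree_eq_of_coeff (by rw [coeff_X_pow_sub_one]; simp [hn.ne]) fun j hj => by
    rw [coeff_X_pow_sub_one]; simp [hj.ne, (hn.trans hj).ne]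

theorem monic_X_pow_sub_one [Nontrivial R] {n : ℕ} (hn : 0 < n) :
    Monic (X θ ^ n - 1 : SkewPoly R θ) := by
  rw [Monic, leadingCoeff, natDegree_X_pow_sub_one hn, coeff_X_pow_sub_one]
  simp [hn.ne]

theorem exists_eq_mul_add_of_monic {g : SkewPoly R θ} (hg : Monic g) (f : SkewPoly R θ) :
    ∃ q r : SkewPoly R θ, f = q * g + r ∧ degree r < natDegree g := by
  simp only [degree_lt_iff_coeff_zero]
  suffices H : ∀ N, ∀ f : SkewPoly R θ, (∀ i, N ≤ i → coeff f i = 0) →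
      ∃ q r : SkewPoly R θ, f = q * g + r ∧ ∀ i, natDegree g ≤ i → coeff r i = 0 from
    H _ f fun i hi => coeff_eq_zero_of_natDegree_lt (Nat.lt_of_succ_le hi)
  intro N
  induction N with
  | zero =>
    intro f hf
    exact ⟨0, f, by rw [zero_mul, zero_add], fun i _ => hf i (Nat.zero_le i)⟩
  | succ N ih =>
    intro f hf
    by_cases hN : N < natDegree g
    · exact ⟨0, f, by rw [zero_mul, zero_add], fun i hi => hf i (by omega)⟩
    -- subtracting `(f_N x^(N - deg g)) * g` kills the coefficient of `x^N`
    set s : SkewPoly R θ := monomial (N - natDegree g) (coeff f N)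
    have hlow : ∀ i, N ≤ i → coeff (f - s * g) i = 0 := by
      intro i hi
      rw [coeff_sub, coeff_monomial_mul, if_pos (by omega)]
      rcases eq_or_lt_of_le hi with rfl | hi
      · rw [show N - (N - natDegree g) = natDegree g by omega,
          show coeff g (natDegree g) = 1 from hg, map_one, mul_one, sub_self]
      · rw [hf i hi, coeff_eq_zero_of_natDegree_lt (by omega : natDegree g < _), map_zero,
          mul_zero, sub_zero]
    obtain ⟨q, r, hqr, hr⟩ := ih _ hlow
    exact ⟨q + s, r, by rw [add_mul, add_right_comm, ← hqr, sub_add_cancel], hr⟩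

end SkewPoly

namespace Polynomial

variable {R : Type*} [CommRing R]

theorem exists_eq_mul_mul_add_mul_add [Nontrivial R] {k g : R[X]} (hk : k.Monic) (hg : g.Monic)
    (f : R[X]) : ∃ y x s : R[X], f = y * k * g + x * g + s ∧ x.degree < k.degree ∧
      s.degree < g.degree := by
  refine ⟨f /ₘ g /ₘ k, f /ₘ g %ₘ k, f %ₘ g, ?_, degree_modByMonic_lt _ hk,
    degree_modByMonic_lt _ hg⟩
  conv_lhs => rw [← modByMonic_add_div f g, ← modByMonic_add_div (f /ₘ g) k]
  ring

theorem eq_zero_of_mul_add_eq_mul_mul [IsDomain R] {k g x s y : R[X]}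
    (h : x * g + s = y * k * g) (hx : x.degree < k.degree) (hs : s.degree < g.degree) :
    y = 0 ∧ x = 0 ∧ s = 0 := by
  have hs0 : s = 0 := eq_zero_of_dvd_of_degree_lt ⟨y * k - x, by linear_combination h⟩ hs
  rw [hs0, add_zero] at h
  have hxy : x = y * k := mul_right_cancel₀ (ne_zero_of_degree_gt hs) h
  have hx0 : x = 0 := eq_zero_of_dvd_of_degree_lt ⟨y, by rw [hxy, mul_comm]⟩ hx
  rw [hx0, eq_comm, mul_eq_zero] at hxy
  exact ⟨hxy.resolve_right (ne_zero_of_degree_gt hx), hx0, hs0⟩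

end Polynomial

theorem Ideal.mkQ_mul_add_of_span_singleton {A : Type*} [Ring A] (w h x : A) :
    (Ideal.span {w}).mkQ (h * w + x) = (Ideal.span {w}).mkQ x := by
  rw [map_add, Submodule.mkQ_apply, (Submodule.Quotient.mk_eq_zero _).2
    (Ideal.mul_mem_left _ h (Ideal.mem_span_singleton_self w)), zero_add]

theorem Ideal.exists_of_mkQ_mem_span_singleton {A : Type*} [Ring A] {w x y : A}
    (hxy : (Ideal.span {w}).mkQ x ∈ Submodule.span A {(Ideal.span {w}).mkQ y}) :
    ∃ z h, x = h * w + z * y := by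
  obtain ⟨z, hz⟩ := Submodule.mem_span_singleton.1 hxy
  rw [← map_smul, smul_eq_mul, Submodule.mkQ_apply, Submodule.mkQ_apply,
    Submodule.Quotient.eq, Ideal.mem_span_singleton'] at hz
  obtain ⟨h, hh⟩ := hz
  exact ⟨z, -h, by rw [neg_mul, hh]; abel⟩

namespace DualNumber

variable {p : ℕ}

theorem ringAut_apply_inl (σ : RingAut (DualNumber (ZMod p))) (a : ZMod p) :
    σ (inl a) = inl a := by
  obtain ⟨z, rfl⟩ := ZMod.intCast_surjective a
  rw [inl_intCast, map_intCast]

variable [Fact p.Prime]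

theorem fst_ringAut_apply_eps (σ : RingAut (DualNumber (ZMod p))) : fst (σ ε) = 0 := by
  have h : fst (σ ε) * fst (σ ε) = 0 := by
    rw [← fst_mul, ← map_mul, eps_mul_eps, map_zero, fst_zero]
  exact mul_self_eq_zero.mp h

theorem ringAut_apply_inr (σ : RingAut (DualNumber (ZMod p))) (x : ZMod p) :
    σ (inr x) = inr (x * snd (σ ε)) := by
  have hσε : σ ε = inr (snd (σ ε)) := by ext <;> simp [fst_ringAut_apply_eps]
  have hx : (inr x : DualNumber (ZMod p)) = inl x * ε := by ext <;> simp
  rw [hx, map_mul, ringAut_apply_inl, hσε]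
  ext <;> simp [mul_comm]

theorem fst_ringAut_apply (σ : RingAut (DualNumber (ZMod p))) (y : DualNumber (ZMod p)) :
    fst (σ y) = fst y := by
  rw [← inl_fst_add_inr_snd_eq y, map_add, ringAut_apply_inl, ringAut_apply_inr]
  simp

theorem snd_ringAut_apply_eps_ne_zero (σ : RingAut (DualNumber (ZMod p))) :
    snd (σ ε) ≠ 0 := by
  intro h
  have : σ ε = σ 0 := by
    rw [map_zero]
    ext
    · exact fst_ringAut_apply_eps σ
    · exact h
  simpa using congrArg snd (σ.injective this)

end DualNumber

namespace SkewPoly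

open DualNumber Polynomial

variable {p : ℕ} {θ : RingAut (DualNumber (ZMod p))}

theorem coeff_ofPoly (s : (ZMod p)[X]) (i : ℕ) : coeff (ofPoly θ s) i = inl (s.coeff i) := by
  simp [ofPoly, coeff, toFinsupp, ofFinsupp, Polynomial.toFinsupp_apply]

theorem coeff_fstPoly (f : SkewPoly (DualNumber (ZMod p)) θ) (i : ℕ) :
    (fstPoly f).coeff i = fst (coeff f i) := by
  simp [fstPoly, coeff]

theorem coeff_C_eps_mul_ofPoly (s : (ZMod p)[X]) (i : ℕ) :
    coeff (C θ ε * ofPoly θ s) i = inr (s.coeff i) := by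
  rw [show C θ ε = monomial 0 ε from rfl, coeff_monomial_mul, if_pos (Nat.zero_le i)]
  ext <;> simp [coeff_ofPoly]

variable (θ) in
noncomputable def epsPoly : (ZMod p)[X] →+ SkewPoly (DualNumber (ZMod p)) θ where
  toFun s := C θ ε * ofPoly θ s
  map_zero' := ext fun i => by rw [coeff_C_eps_mul_ofPoly]; simp
  map_add' s s' := ext fun i => by simp [coeff_C_eps_mul_ofPoly, add_smul]

theorem coeff_epsPoly (s : (ZMod p)[X]) (i : ℕ) : coeff (epsPoly θ s) i = inr (s.coeff i) :=
  coeff_C_eps_mul_ofPoly s i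

theorem degree_epsPoly_lt_iff {s : (ZMod p)[X]} {m : ℕ} :
    degree (epsPoly θ s) < m ↔ s.degree < m := by
  rw [degree_lt_iff_coeff_zero, Polynomial.degree_lt_iff_coeff_zero]
  refine forall₂_congr fun i _ => ?_
  rw [coeff_epsPoly, ← inr_zero, inr_injective.eq_iff]

theorem epsPoly_injective : Function.Injective (epsPoly θ) := fun s s' h =>
  Polynomial.ext fun i => inr_injective (by rw [← coeff_epsPoly, h, coeff_epsPoly])

theorem fstPoly_add (f g : SkewPoly (DualNumber (ZMod p)) θ) :
    fstPoly (f + g) = fstPoly f + fstPoly g :=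
  Polynomial.ext fun i => by simp [coeff_fstPoly]

theorem fstPoly_epsPoly (s : (ZMod p)[X]) : fstPoly (epsPoly θ s) = 0 :=
  Polynomial.ext fun i => by simp [coeff_fstPoly, coeff_epsPoly]

theorem degree_fstPoly_lt {f : SkewPoly (DualNumber (ZMod p)) θ} {m : ℕ} (hf : degree f < m) :
    (fstPoly f).degree < m := by
  rw [degree_lt_iff_coeff_zero] at hf
  rw [Polynomial.degree_lt_iff_coeff_zero]
  intro i hi
  rw [coeff_fstPoly, hf i hi, fst_zero]

theorem monic_fstPoly {f : SkewPoly (DualNumber (ZMod p)) θ} (hf : Monic f) :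
    (fstPoly f).Monic := by
  refine monic_of_natDegree_le_of_coeff_eq_one (natDegree f)
    (natDegree_le_iff_coeff_eq_zero.2 fun i hi => ?_) ?_
  · rw [coeff_fstPoly, coeff_eq_zero_of_natDegree_lt hi, fst_zero]
  · rw [coeff_fstPoly, show coeff f (natDegree f) = 1 from hf, fst_one]

theorem exists_eq_epsPoly_of_fstPoly_eq_zero {f : SkewPoly (DualNumber (ZMod p)) θ}
    (hf : fstPoly f = 0) : ∃ s, f = epsPoly θ s := by
  refine ⟨.ofFinsupp (.ofCoeff (Finsupp.mapRange snd snd_zero (toFinsupp f))), ext fun i => ?_⟩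
  have hi : fst (coeff f i) = 0 := by rw [← coeff_fstPoly, hf, Polynomial.coeff_zero]
  rw [coeff_epsPoly]
  ext
  · exact hi
  · simp [coeff]

variable (θ) in
noncomputable def mixedCode (n : ℕ) (g : SkewPoly (DualNumber (ZMod p)) θ) (pp abar : (ZMod p)[X]) :
    Submodule (SkewPoly (DualNumber (ZMod p)) θ)
      (SkewPoly (DualNumber (ZMod p)) θ ⧸ Ideal.span {X θ ^ n - 1}) :=
  Submodule.span _ {(Ideal.span {X θ ^ n - 1}).mkQ (g + epsPoly θ pp),
    (Ideal.span {X θ ^ n - 1}).mkQ (epsPoly θ abar)}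

variable [Fact p.Prime]

theorem natDegree_fstPoly {f : SkewPoly (DualNumber (ZMod p)) θ} (hf : Monic f) :
    (fstPoly f).natDegree = natDegree f := by
  refine natDegree_eq_of_le_of_coeff_ne_zero (natDegree_le_iff_coeff_eq_zero.2 fun i hi => ?_) ?_
  · rw [coeff_fstPoly, coeff_eq_zero_of_natDegree_lt hi, fst_zero]
  · rw [coeff_fstPoly, show coeff f (natDegree f) = 1 from hf, fst_one]
    exact one_ne_zero

theorem fstPoly_mul (f g : SkewPoly (DualNumber (ZMod p)) θ) :
    fstPoly (f * g) = fstPoly f * fstPoly g := by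
  ext m
  rw [coeff_fstPoly, SkewPoly.coeff_mul, Polynomial.coeff_mul,
    Finset.Nat.sum_antidiagonal_eq_sum_range_succ_mk, fst_sum]
  refine Finset.sum_congr rfl fun i _ => ?_
  rw [fst_mul, fst_ringAut_apply, coeff_fstPoly, coeff_fstPoly]

theorem epsPoly_mul (s : (ZMod p)[X]) (f : SkewPoly (DualNumber (ZMod p)) θ) :
    epsPoly θ s * f = epsPoly θ (s * fstPoly f) := by
  refine SkewPoly.ext fun m => ?_
  rw [SkewPoly.coeff_mul, coeff_epsPoly, Polynomial.coeff_mul,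
    Finset.Nat.sum_antidiagonal_eq_sum_range_succ_mk, inr_sum]
  refine Finset.sum_congr rfl fun i _ => ?_
  rw [coeff_epsPoly, coeff_fstPoly, ← fst_ringAut_apply (θ ^ i)]
  ext <;> simp [mul_comm]

theorem monomial_mul_epsPoly (i : ℕ) (b : DualNumber (ZMod p)) (s : (ZMod p)[X]) :
    monomial i b * epsPoly θ s =
      epsPoly θ (Polynomial.C (fst b * snd ((θ ^ i) ε)) * (Polynomial.X ^ i * s)) := by
  refine SkewPoly.ext fun m => ?_
  rw [coeff_monomial_mul, coeff_epsPoly, coeff_epsPoly, Polynomial.coeff_C_mul, coeff_X_pow_mul']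
  split_ifs
  · rw [ringAut_apply_inr]
    ext <;> simp [mul_comm, mul_left_comm]
  · simp

theorem exists_mul_epsPoly_eq (f : SkewPoly (DualNumber (ZMod p)) θ) (s : (ZMod p)[X]) :
    ∃ m, f * epsPoly θ s = epsPoly θ (m * s) := by
  induction f using induction_on with
  | zero => exact ⟨0, by rw [zero_mul, zero_mul, map_zero]⟩
  | add f f' hf hf' =>
    obtain ⟨m, hm⟩ := hf
    obtain ⟨m', hm'⟩ := hf'
    exact ⟨m + m', by rw [add_mul, hm, hm', add_mul, map_add]⟩
  | monomial i b => exact ⟨_, by rw [monomial_mul_epsPoly, mul_assoc]⟩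

theorem exists_mul_epsPoly_eq_epsPoly_mul (m s : (ZMod p)[X]) :
    ∃ f : SkewPoly (DualNumber (ZMod p)) θ, f * epsPoly θ s = epsPoly θ (m * s) := by
  induction m using Polynomial.induction_on' with
  | add m m' hm hm' =>
    obtain ⟨f, hf⟩ := hm
    obtain ⟨f', hf'⟩ := hm'
    exact ⟨f + f', by rw [add_mul, hf, hf', add_mul, map_add]⟩
  | monomial i a =>
    refine ⟨monomial i (inl (a * (snd ((θ ^ i) ε))⁻¹)), ?_⟩
    rw [monomial_mul_epsPoly, fst_inl, inv_mul_cancel_right₀ (snd_ringAut_apply_eps_ne_zero _),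
      ← mul_assoc, C_mul_X_pow_eq_monomial]

variable {n : ℕ} {g k : SkewPoly (DualNumber (ZMod p)) θ} {pp abar g₁ : (ZMod p)[X]}

theorem mkQ_mem_mixedCode (Q : SkewPoly (DualNumber (ZMod p)) θ) (s : (ZMod p)[X]) :
    (Ideal.span {X θ ^ n - 1}).mkQ (Q * (g + epsPoly θ pp) + epsPoly θ (s * abar)) ∈
      mixedCode θ n g pp abar := by
  obtain ⟨f, hf⟩ := exists_mul_epsPoly_eq_epsPoly_mul (θ := θ) s abar
  rw [← hf, map_add, ← smul_eq_mul, ← smul_eq_mul, map_smul, map_smul]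
  exact add_mem (Submodule.smul_mem _ _ (Submodule.subset_span (by simp)))
    (Submodule.smul_mem _ _ (Submodule.subset_span (by simp)))

theorem eq_zero_of_mul_add_epsPoly_eq_mul (hkg : X θ ^ n - 1 = k * g) (hk : Monic k)
    (hg : fstPoly g = abar * g₁) (habar : abar ≠ 0) (hg₁ : g₁.Monic)
    {Q h : SkewPoly (DualNumber (ZMod p)) θ} {s : (ZMod p)[X]} (hQ : degree Q < natDegree k)
    (hs : s.degree < g₁.degree)
    (heq : Q * (g + epsPoly θ pp) + epsPoly θ (s * abar) = h * (X θ ^ n - 1)) :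
    Q = 0 ∧ s = 0 := by
  have hkdeg : (fstPoly k).degree = natDegree k := by
    rw [degree_eq_natDegree (monic_fstPoly hk).ne_zero, natDegree_fstPoly hk]
  have hG : fstPoly (g + epsPoly θ pp) = fstPoly g := by
    rw [fstPoly_add, fstPoly_epsPoly, add_zero]
  rw [hkg] at heq
  have hred : fstPoly Q * fstPoly g + 0 = fstPoly h * fstPoly k * fstPoly g := by
    simpa [fstPoly_add, fstPoly_mul, fstPoly_epsPoly, hG, mul_assoc] using congrArg fstPoly heq
  obtain ⟨hh₀, hQ₀, -⟩ := eq_zero_of_mul_add_eq_mul_mul hred (hkdeg ▸ degree_fstPoly_lt hQ)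
    (by rw [degree_zero, bot_lt_iff_ne_bot, Ne, degree_eq_bot, hg]
        exact mul_ne_zero habar hg₁.ne_zero)
  obtain ⟨q, rfl⟩ := exists_eq_epsPoly_of_fstPoly_eq_zero hQ₀
  obtain ⟨h', rfl⟩ := exists_eq_epsPoly_of_fstPoly_eq_zero hh₀
  rw [epsPoly_mul, epsPoly_mul, hG, fstPoly_mul, ← map_add, hg] at heq
  have hcancel : (q * g₁ + s) * abar = (h' * fstPoly k * g₁) * abar := by
    linear_combination epsPoly_injective heq
  obtain ⟨-, hq, hs₀⟩ := eq_zero_of_mul_add_eq_mul_mul (mul_right_cancel₀ habar hcancel)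
    (hkdeg ▸ degree_epsPoly_lt_iff.1 hQ) hs
  exact ⟨by rw [hq, map_zero], hs₀⟩

theorem eq_of_mkQ_mul_add_epsPoly_eq (hkg : X θ ^ n - 1 = k * g) (hk : Monic k) (hg : fstPoly g = abar * g₁)
    (habar : abar ≠ 0) (hg₁ : g₁.Monic) {Q Q' : SkewPoly (DualNumber (ZMod p)) θ}
    {s s' : (ZMod p)[X]} (hQ : degree Q < natDegree k) (hQ' : degree Q' < natDegree k)
    (hs : s.degree < g₁.degree) (hs' : s'.degree < g₁.degree)
    (h : (Ideal.span {X θ ^ n - 1}).mkQ (Q * (g + epsPoly θ pp) + epsPoly θ (s * abar)) =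
      (Ideal.span {X θ ^ n - 1}).mkQ (Q' * (g + epsPoly θ pp) + epsPoly θ (s' * abar))) :
    Q = Q' ∧ s = s' := by
  obtain ⟨h, hh⟩ := Ideal.mem_span_singleton'.1 ((Submodule.Quotient.eq _).1 h)
  have hdeg : degree (Q - Q') < natDegree k := by
    rw [← degree_toPolynomial, map_sub]
    exact (degree_sub_le _ _).trans_lt (max_lt hQ hQ')
  obtain ⟨hQ₀, hs₀⟩ := eq_zero_of_mul_add_epsPoly_eq_mul (pp := pp) (h := h) hkg hk hg habar hg₁
    hdeg ((degree_sub_le _ _).trans_lt (max_lt hs hs'))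
    (by rw [sub_mul, sub_mul, map_sub, hh]; abel)
  exact ⟨sub_eq_zero.1 hQ₀, sub_eq_zero.1 hs₀⟩

theorem exists_reduce_mul_add_mul (hkg : X θ ^ n - 1 = k * g) (hk : Monic k)
    (hquot : ∃ z h, k * epsPoly θ pp = h * (X θ ^ n - 1) + z * epsPoly θ abar)
    (a b : SkewPoly (DualNumber (ZMod p)) θ) :
    ∃ h Q M, a * (g + epsPoly θ pp) + b * epsPoly θ abar =
      h * (X θ ^ n - 1) + (Q * (g + epsPoly θ pp) + epsPoly θ (M * abar)) ∧
      degree Q < natDegree k := by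
  obtain ⟨z, h, hz⟩ := hquot
  obtain ⟨q, Q, rfl, hQ⟩ := exists_eq_mul_add_of_monic hk a
  obtain ⟨m₁, hm₁⟩ := exists_mul_epsPoly_eq b abar
  obtain ⟨m₂, hm₂⟩ := exists_mul_epsPoly_eq z abar
  obtain ⟨m₃, hm₃⟩ := exists_mul_epsPoly_eq q (m₂ * abar)
  refine ⟨q + q * h, Q, m₃ * m₂ + m₁, ?_, hQ⟩
  have hkG : k * (g + epsPoly θ pp) = (1 + h) * (X θ ^ n - 1) + epsPoly θ (m₂ * abar) := by
    rw [mul_add, ← hkg, hz, hm₂, add_mul, one_mul, add_assoc]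
  rw [add_mul, mul_assoc, hkG, add_mul (m₃ * m₂), mul_assoc m₃, map_add, ← hm₃, ← hm₁]
  noncomm_ring

theorem exists_reduce_epsPoly_mul (hkg : X θ ^ n - 1 = k * g) (hk : Monic k)
    (hg : fstPoly g = abar * g₁) (hg₁ : g₁.Monic) (M : (ZMod p)[X]) :
    ∃ h w s, epsPoly θ (M * abar) =
      h * (X θ ^ n - 1) + (epsPoly θ w * (g + epsPoly θ pp) + epsPoly θ (s * abar)) ∧
      w.degree < natDegree k ∧ s.degree < g₁.degree := by
  obtain ⟨y, w, s, hM, hw, hs⟩ := exists_eq_mul_mul_add_mul_add (monic_fstPoly hk) hg₁ M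
  refine ⟨epsPoly θ y, w, s, ?_, ?_, hs⟩
  · rw [epsPoly_mul, epsPoly_mul, hkg, fstPoly_mul, fstPoly_add, fstPoly_epsPoly, add_zero, hg,
      ← map_add, ← map_add, hM]
    congr 1
    ring
  · rwa [degree_eq_natDegree (monic_fstPoly hk).ne_zero, natDegree_fstPoly hk] at hw

theorem exists_mkQ_eq_of_mem_mixedCode (hkg : X θ ^ n - 1 = k * g) (hk : Monic k)
    (hg : fstPoly g = abar * g₁) (hg₁ : g₁.Monic)
    (hquot : ∃ z h, k * epsPoly θ pp = h * (X θ ^ n - 1) + z * epsPoly θ abar)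
    {x} (hx : x ∈ mixedCode θ n g pp abar) :
    ∃ Q s, degree Q < natDegree k ∧ s.degree < g₁.degree ∧
      (Ideal.span {X θ ^ n - 1}).mkQ (Q * (g + epsPoly θ pp) + epsPoly θ (s * abar)) = x := by
  obtain ⟨a, b, rfl⟩ := Submodule.mem_span_pair.1 hx
  obtain ⟨h, Q, M, hab, hQ⟩ := exists_reduce_mul_add_mul hkg hk hquot a b
  obtain ⟨h', w, s, hM, hw, hs⟩ := exists_reduce_epsPoly_mul (pp := pp) hkg hk hg hg₁ M
  refine ⟨Q + epsPoly θ w, s, ?_, hs, ?_⟩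
  · rw [degree_lt_iff_coeff_zero] at hQ ⊢
    intro i hi
    rw [coeff_add, hQ i hi, zero_add, coeff_epsPoly,
      Polynomial.coeff_eq_zero_of_degree_lt (hw.trans_le (by exact_mod_cast hi)), inr_zero]
  · rw [← map_smul, ← map_smul, smul_eq_mul, smul_eq_mul, ← map_add, hab, hM,
      Ideal.mkQ_mul_add_of_span_singleton, ← Ideal.mkQ_mul_add_of_span_singleton _ h', add_mul]
    exact congrArg _ (by abel)

theorem card_mixedCode (hkg : X θ ^ n - 1 = k * g) (hk : Monic k) (hg : fstPoly g = abar * g₁)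
    (habar : abar ≠ 0) (hg₁ : g₁.Monic)
    (hquot : ∃ z h, k * epsPoly θ pp = h * (X θ ^ n - 1) + z * epsPoly θ abar) :
    Nat.card (mixedCode θ n g pp abar) = (p ^ 2) ^ natDegree k * p ^ g₁.natDegree := by
  have hg₁deg : g₁.degree = g₁.natDegree := degree_eq_natDegree hg₁.ne_zero
  let Φ : degreeLT (DualNumber (ZMod p)) (natDegree k) × degreeLT (ZMod p) g₁.natDegree →
      mixedCode θ n g pp abar := fun qs => ⟨_, mkQ_mem_mixedCode (toPolynomial.symm qs.1) qs.2⟩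
  have hΦ : Function.Bijective Φ := by
    constructor
    · rintro ⟨⟨q, hq⟩, ⟨s, hs⟩⟩ ⟨⟨q', hq'⟩, ⟨s', hs'⟩⟩ hΦ
      rw [← AddEquiv.apply_symm_apply toPolynomial q, toPolynomial_mem_degreeLT] at hq
      rw [← AddEquiv.apply_symm_apply toPolynomial q', toPolynomial_mem_degreeLT] at hq'
      rw [mem_degreeLT, ← hg₁deg] at hs hs'
      obtain ⟨hqq', rfl⟩ := eq_of_mkQ_mul_add_epsPoly_eq hkg hk hg habar hg₁ hq hq' hs hs'
        (congrArg Subtype.val hΦ)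
      obtain rfl := toPolynomial.symm.injective hqq'
      rfl
    · rintro ⟨x, hx⟩
      obtain ⟨Q, s, hQ, hs, rfl⟩ := exists_mkQ_eq_of_mem_mixedCode hkg hk hg hg₁ hquot hx
      refine ⟨(⟨toPolynomial Q, toPolynomial_mem_degreeLT.2 hQ⟩,
        ⟨s, mem_degreeLT.2 (hg₁deg ▸ hs)⟩), ?_⟩
      simp [Φ]
  have hcard : Nat.card (DualNumber (ZMod p)) = p ^ 2 := by
    rw [show Nat.card (DualNumber (ZMod p)) = Nat.card (ZMod p × ZMod p) from rfl, Nat.card_prod,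
      Nat.card_zmod, sq]
  rw [← Nat.card_eq_of_bijective Φ hΦ, Nat.card_prod, Nat.card_congr (degreeLTEquiv _ _).toEquiv,
    Nat.card_congr (degreeLTEquiv _ _).toEquiv, Nat.card_fun, Nat.card_fun, hcard, Nat.card_zmod,
    Nat.card_fin, Nat.card_fin]

end SkewPoly

open SkewPoly DualNumber in
theorem skew_code_mixed_cardinality_general (p : ℕ) (hp : p.Prime)
    (θ : RingAut (DualNumber (ZMod p))) (n : ℕ) (hn : 0 < n)
    (g : SkewPoly (DualNumber (ZMod p)) θ) (hg : SkewPoly.Monic g)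
    (r : ℕ) (hr : SkewPoly.natDegree g = r)
    (pp : Polynomial (ZMod p))
    (abar : Polynomial (ZMod p)) (habar : abar.Monic) (t : ℕ)
    (ht : abar.natDegree = t)
    (hk : ∃ k : SkewPoly (DualNumber (ZMod p)) θ, SkewPoly.X θ ^ n - 1 = k * g)
    (hdvdg : abar ∣ SkewPoly.fstPoly g)
    (hquot : ∀ k : SkewPoly (DualNumber (ZMod p)) θ, SkewPoly.X θ ^ n - 1 = k * g →
      (Ideal.span {SkewPoly.X θ ^ n - 1}).mkQ (k * (SkewPoly.C θ ε * SkewPoly.ofPoly θ pp)) ∈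
        Submodule.span (SkewPoly (DualNumber (ZMod p)) θ)
          {(Ideal.span {SkewPoly.X θ ^ n - 1}).mkQ (SkewPoly.C θ ε * SkewPoly.ofPoly θ abar)})
    (Code : Submodule (SkewPoly (DualNumber (ZMod p)) θ)
      (SkewPoly (DualNumber (ZMod p)) θ ⧸ Ideal.span {SkewPoly.X θ ^ n - 1}))
    (hCode : Code = Submodule.span (SkewPoly (DualNumber (ZMod p)) θ)
      {(Ideal.span {SkewPoly.X θ ^ n - 1}).mkQ (g + SkewPoly.C θ ε * SkewPoly.ofPoly θ pp),
       (Ideal.span {SkewPoly.X θ ^ n - 1}).mkQ (SkewPoly.C θ ε * SkewPoly.ofPoly θ abar)}) :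
    Nat.card Code = p ^ (2 * (n - r)) * p ^ (r - t) := by
  have := Fact.mk hp
  subst hCode
  obtain ⟨k, hkg⟩ := hk
  obtain ⟨g₁, hg₁⟩ := hdvdg
  have hkm : Monic k := Monic.of_mul_monic_right hg (by rw [← hkg]; exact monic_X_pow_sub_one hn)
  have hkdeg : natDegree k + r = n := by
    rw [← hr, ← natDegree_mul_monic hg hkm.ne_zero, ← hkg, natDegree_X_pow_sub_one hn]
  have hg₁m : g₁.Monic := habar.of_mul_monic_left (hg₁ ▸ monic_fstPoly hg)
  have hg₁deg : g₁.natDegree = r - t := by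
    have h := congrArg Polynomial.natDegree hg₁
    rw [natDegree_fstPoly hg, habar.natDegree_mul hg₁m] at h
    omega
  rw [pow_mul, ← hg₁deg, show n - r = natDegree k by omega]
  exact card_mixedCode hkg hkm hg₁ habar.ne_zero hg₁m
    (Ideal.exists_of_mkQ_mem_span_singleton (hquot k hkg))

open SkewPoly DualNumber in
/-- For the code `C = ⟨g(x) + u p(x), u ā(x)⟩`, with `g` monic of degree `r`,
`ā ∈ F_p[x]` monic of degree `t < r`, `xⁿ-1 = k∗g` in `R[x;θ]`,
`ā ∣ xⁿ-1` in `F_p[x]`, `ā ∣ (g mod u)`, and `((xⁿ-1)/g)·u p(x) ∈ ⟨u ā⟩`,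
one has `|C| = p^{2(n-r)} · p^{r-t}`. -/
theorem skew_code_mixed_cardinality (p : ℕ) (hp : p.Prime) (hodd : p ≠ 2)
    (θ : RingAut (DualNumber (ZMod p))) (n : ℕ) (hn : 0 < n)
    (g : SkewPoly (DualNumber (ZMod p)) θ) (hg : SkewPoly.Monic g)
    (r : ℕ) (hr : SkewPoly.natDegree g = r) (hrn : r ≤ n)
    (pp : Polynomial (ZMod p))
    (abar : Polynomial (ZMod p)) (habar : abar.Monic) (t : ℕ)
    (ht : abar.natDegree = t) (htr : t < r)
    (hk : ∃ k : SkewPoly (DualNumber (ZMod p)) θ, SkewPoly.X θ ^ n - 1 = k * g)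
    (hdvd : abar ∣ (Polynomial.X ^ n - 1 : Polynomial (ZMod p)))
    (hdvdg : abar ∣ SkewPoly.fstPoly g)
    (hquot : ∀ k : SkewPoly (DualNumber (ZMod p)) θ, SkewPoly.X θ ^ n - 1 = k * g →
      (Ideal.span {SkewPoly.X θ ^ n - 1}).mkQ (k * (SkewPoly.C θ ε * SkewPoly.ofPoly θ pp)) ∈
        Submodule.span (SkewPoly (DualNumber (ZMod p)) θ)
          {(Ideal.span {SkewPoly.X θ ^ n - 1}).mkQ (SkewPoly.C θ ε * SkewPoly.ofPoly θ abar)})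
    (Code : Submodule (SkewPoly (DualNumber (ZMod p)) θ)
      (SkewPoly (DualNumber (ZMod p)) θ ⧸ Ideal.span {SkewPoly.X θ ^ n - 1}))
    (hCode : Code = Submodule.span (SkewPoly (DualNumber (ZMod p)) θ)
      {(Ideal.span {SkewPoly.X θ ^ n - 1}).mkQ (g + SkewPoly.C θ ε * SkewPoly.ofPoly θ pp),
       (Ideal.span {SkewPoly.X θ ^ n - 1}).mkQ (SkewPoly.C θ ε * SkewPoly.ofPoly θ abar)}) :
    Nat.card Code = p ^ (2 * (n - r)) * p ^ (r - t) :=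
  skew_code_mixed_cardinality_general p hp θ n hn g hg r hr pp abar habar t ht hk hdvdg hquot Code
    hCode
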